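/- With the definitions below, the following hold: c > 0; 1/2 ≤ g(r) ≤ 1 for every r ∈ [0, R₂]; f(0) = 0 and f(r) > 0 for r > 0; f is continuously differentiable on [0,∞) with f′(r) = φ(r)·g(r ∧ R₂) and 0 < f′(r) ≤ 1 for all r; f is strictly increasing and concave on [0,∞); and f is affine on [R₂,∞). -/
import Mathlib


/-- `κ*(r) = κ(r)` if `r·κ(r) ≥ −A`, and `κ*(r) = −A/r` otherwise. -/
noncomputable def kstar (κ : ℝ → ℝ) (A r : ℝ) : ℝ :=
  if -A ≤ r * κ r then κ r else -A / r

/-- `φ(r) = exp(−(2/D²) ∫₀ʳ (u·κ*(u) + A) du)`. -/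
noncomputable def phi (κ : ℝ → ℝ) (A D r : ℝ) : ℝ :=
  Real.exp (-(2 / D ^ 2) * ∫ u in (0:ℝ)..r, (u * kstar κ A u + A))

/-- `Φ(r) = ∫₀ʳ φ(s) ds`. -/
noncomputable def PhiF (κ : ℝ → ℝ) (A D r : ℝ) : ℝ :=
  ∫ s in (0:ℝ)..r, phi κ A D s

/-- `c = D² / (4 ∫₀^{R₂} Φ(s) φ(s)⁻¹ ds)`. -/
noncomputable def cconst (κ : ℝ → ℝ) (A D R₂ : ℝ) : ℝ :=
  D ^ 2 / (4 * ∫ s in (0:ℝ)..R₂, PhiF κ A D s * (phi κ A D s)⁻¹)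

/-- `g(r) = 1 − (2c/D²) ∫₀ʳ Φ(s) φ(s)⁻¹ ds`. -/
noncomputable def gfun (κ : ℝ → ℝ) (A D R₂ r : ℝ) : ℝ :=
  1 - (2 * cconst κ A D R₂ / D ^ 2) * ∫ s in (0:ℝ)..r, PhiF κ A D s * (phi κ A D s)⁻¹

/-- `f(r) = ∫₀ʳ φ(s)·g(s ∧ R₂) ds`. -/
noncomputable def ffun (κ : ℝ → ℝ) (A D R₂ r : ℝ) : ℝ :=
  ∫ s in (0:ℝ)..r, phi κ A D s * gfun κ A D R₂ (min s R₂)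

/- ### Auxiliary material -/

open Set MeasureTheory intervalIntegral

section Aux

/-- glue continuity on `[a,0]` and `[0,∞)` to `[a,∞)`. -/
lemma contOn_glue {f : ℝ → ℝ} {a : ℝ} (ha : a ≤ 0)
    (h1 : ContinuousOn f (Icc a 0)) (h2 : ContinuousOn f (Ici 0)) :
    ContinuousOn f (Ici a) := by
  have hset : Ici a = Icc a 0 ∪ Ici 0 := by
    ext x
    simp only [mem_Ici, mem_union, mem_Icc]
    constructor
    · intro hx
      rcases le_or_gt x 0 with h | h
      · exact Or.inl ⟨hx, h⟩
      · exact Or.inr h.le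
    · rintro (⟨h, _⟩ | h)
      · exact h
      · exact ha.trans h
  rw [hset]
  intro x hx
  have c1 : ContinuousWithinAt f (Icc a 0) x := by
    rcases le_or_gt x 0 with h | h
    · rcases hx with h' | h'
      · exact h1 x h'
      · exact h1 x ⟨ha.trans (le_antisymm h h' ▸ le_rfl), h⟩
    · exact continuousWithinAt_of_notMem_closure (by
        rw [closure_Icc]
        exact fun hmem => absurd hmem.2 (not_le.mpr h))
  have c2 : ContinuousWithinAt f (Ici 0) x := by
    rcases le_or_gt 0 x with h | h
    · exact h2 x h
    · exact continuousWithinAt_of_notMem_closure (by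
        rw [closure_Ici]
        exact fun hmem => absurd hmem (not_le.mpr h))
  exact c1.union c2

/-- Continuity of a primitive on `Ici a` given interval integrability. -/
lemma contOn_primitive_Ici {f : ℝ → ℝ} {a : ℝ} (ha : a ≤ 0)
    (hint : ∀ b, a ≤ b → IntervalIntegrable f volume 0 b) :
    ContinuousOn (fun r => ∫ t in (0:ℝ)..r, f t) (Ici a) := by
  intro t ht
  set b₂ : ℝ := max (t + 1) 0 with hb₂
  have hab : a ≤ b₂ := le_trans ha (le_max_right _ _)
  have h0 : (0:ℝ) ∈ uIcc a b₂ := by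
    rw [uIcc_of_le hab]
    exact ⟨ha, le_max_right _ _⟩
  have hi : IntervalIntegrable f volume a b₂ :=
    (hint a le_rfl).symm.trans (hint b₂ hab)
  have h1 : ContinuousOn (fun r => ∫ t in (0:ℝ)..r, f t) (uIcc a b₂) :=
    continuousOn_primitive_interval' hi h0
  have htmem : t ∈ uIcc a b₂ := by
    rw [uIcc_of_le hab]
    exact ⟨ht, le_max_of_le_left (by linarith)⟩
  refine (h1 t htmem).mono_of_mem_nhdsWithin ?_
  have : uIcc a b₂ = Ici a ∩ Iic b₂ := by
    rw [uIcc_of_le hab, ← Ici_inter_Iic]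
  rw [this]
  exact inter_mem_nhdsWithin _ (Iic_mem_nhds (by
    have : t < t + 1 := by linarith
    exact lt_of_lt_of_le this (le_max_left _ _)))

/-- the integrand of the integral in `phi`, in a better form. -/
noncomputable def mker (κ : ℝ → ℝ) (A u : ℝ) : ℝ := max (u * κ u) (-A) + A

lemma mker_eq {κ : ℝ → ℝ} {A : ℝ} (hA : 0 ≤ A) (u : ℝ) :
    u * kstar κ A u + A = mker κ A u := by
  unfold kstar mker
  split_ifs with h
  · rw [max_eq_left h]
  · have hu : u ≠ 0 := by
      rintro rfl
      exact h (by simpa using neg_nonpos.mpr hA)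
    rw [max_eq_right (not_le.mp h).le]
    field_simp

lemma mker_nonneg (κ : ℝ → ℝ) (A u : ℝ) : 0 ≤ mker κ A u := by
  have := le_max_right (u * κ u) (-A)
  unfold mker; linarith

lemma mker_contOn {κ : ℝ → ℝ} (A : ℝ) (hκc : ContinuousOn κ (Set.Ici 0)) :
    ContinuousOn (mker κ A) (Ici 0) :=
  ((continuousOn_id.mul hκc).sup continuousOn_const).add continuousOn_const

/-- the primitive of `mker`. -/
noncomputable def Jm (κ : ℝ → ℝ) (A r : ℝ) : ℝ := ∫ u in (0:ℝ)..r, mker κ A u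

lemma phi_eq {κ : ℝ → ℝ} {A : ℝ} (hA : 0 ≤ A) (D : ℝ) :
    phi κ A D = fun r => Real.exp (-(2 / D ^ 2) * Jm κ A r) := by
  have hfun : (fun u => u * kstar κ A u + A) = mker κ A := funext (mker_eq hA)
  unfold phi Jm
  rw [hfun]

lemma mker_intInt_pos {κ : ℝ → ℝ} (A : ℝ) (hκc : ContinuousOn κ (Set.Ici 0))
    {a b : ℝ} (ha : 0 ≤ a) (hb : 0 ≤ b) : IntervalIntegrable (mker κ A) volume a b :=
  ((mker_contOn A hκc).mono (by
    rw [uIcc_eq_union]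
    rintro x (hx | hx)
    · exact le_trans ha hx.1
    · exact le_trans hb hx.1)).intervalIntegrable

lemma Jm_contOn_pos {κ : ℝ → ℝ} (A : ℝ) (hκc : ContinuousOn κ (Set.Ici 0)) :
    ContinuousOn (Jm κ A) (Ici 0) :=
  contOn_primitive_Ici le_rfl (fun b hb => mker_intInt_pos A hκc le_rfl hb)

lemma exists_phi_cont {κ : ℝ → ℝ} {A : ℝ} (hA : 0 ≤ A) (D : ℝ)
    (hκc : ContinuousOn κ (Set.Ici 0)) :
    ∃ s₀ : ℝ, s₀ < 0 ∧ ContinuousOn (phi κ A D) (Ici s₀) := by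
  rw [phi_eq hA D]
  by_cases hcase : ∃ s, s < 0 ∧ IntervalIntegrable (mker κ A) volume s 0
  · obtain ⟨s₀, hs₀, hi⟩ := hcase
    refine ⟨s₀, hs₀, ?_⟩
    have hJ : ContinuousOn (Jm κ A) (Ici s₀) := by
      refine contOn_primitive_Ici hs₀.le (fun b hb => ?_)
      rcases le_or_gt 0 b with h | h
      · exact mker_intInt_pos A hκc le_rfl h
      · refine hi.symm.mono_set ?_
        rw [uIcc_of_ge h.le, uIcc_of_ge hs₀.le]
        exact Icc_subset_Icc hb le_rfl
    exact Real.continuous_exp.comp_continuousOn (continuousOn_const.mul hJ)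
  · push_neg at hcase
    refine ⟨-1, by norm_num, ?_⟩
    refine contOn_glue (by norm_num) ?_ ?_
    · refine (continuousOn_const (c := (1:ℝ))).congr (fun r hr => ?_)
      have hJ0 : Jm κ A r = 0 := by
        rcases eq_or_lt_of_le hr.2 with h | h
        · rw [h]; exact intervalIntegral.integral_same
        · refine intervalIntegral.integral_undef (fun hcontra => ?_)
          exact hcase r h hcontra.symm
      simp [hJ0]
    · exact Real.continuous_exp.comp_continuousOn
        (continuousOn_const.mul (Jm_contOn_pos A hκc))

lemma phi_pos (κ : ℝ → ℝ) (A D r : ℝ) : 0 < phi κ A D r := Real.exp_pos _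

lemma Jm_nonneg (κ : ℝ → ℝ) (A : ℝ) {r : ℝ} (hr : 0 ≤ r) : 0 ≤ Jm κ A r :=
  intervalIntegral.integral_nonneg hr (fun u _ => mker_nonneg κ A u)

lemma Jm_mono {κ : ℝ → ℝ} (A : ℝ) (hκc : ContinuousOn κ (Set.Ici 0))
    {a b : ℝ} (ha : 0 ≤ a) (hab : a ≤ b) : Jm κ A a ≤ Jm κ A b := by
  have hadd := integral_add_adjacent_intervals
    (mker_intInt_pos A hκc le_rfl ha) (mker_intInt_pos A hκc ha (ha.trans hab))
  have hnn : 0 ≤ ∫ u in a..b, mker κ A u :=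
    intervalIntegral.integral_nonneg hab (fun u _ => mker_nonneg κ A u)
  unfold Jm
  rw [← hadd]
  linarith

lemma phi_le_one {κ : ℝ → ℝ} {A : ℝ} (hA : 0 ≤ A) (D : ℝ) {r : ℝ} (hr : 0 ≤ r) :
    phi κ A D r ≤ 1 := by
  rw [phi_eq hA D]
  rw [Real.exp_le_one_iff]
  have h1 : (0:ℝ) ≤ 2 / D ^ 2 := by positivity
  exact mul_nonpos_of_nonpos_of_nonneg (by linarith) (Jm_nonneg κ A hr)

lemma phi_anti {κ : ℝ → ℝ} {A : ℝ} (hA : 0 ≤ A) (D : ℝ)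
    (hκc : ContinuousOn κ (Set.Ici 0)) {a b : ℝ} (ha : 0 ≤ a) (hab : a ≤ b) :
    phi κ A D b ≤ phi κ A D a := by
  rw [phi_eq hA D]
  rw [Real.exp_le_exp]
  have h1 : -(2 / D ^ 2) ≤ 0 := by
    have : (0:ℝ) ≤ 2 / D ^ 2 := by positivity
    linarith
  exact mul_le_mul_of_nonpos_left (Jm_mono A hκc ha hab) h1

lemma Jm_const {κ : ℝ → ℝ} {A R₁ R₂ : ℝ} (hκc : ContinuousOn κ (Set.Ici 0))
    (hR₁' : ∀ r, R₁ ≤ r → r * κ r ≤ -A) (hR₁₂ : R₁ ≤ R₂) (hR₂0 : 0 ≤ R₂)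
    {b : ℝ} (hb : R₂ ≤ b) : Jm κ A b = Jm κ A R₂ := by
  have hadd := integral_add_adjacent_intervals
    (mker_intInt_pos A hκc le_rfl hR₂0) (mker_intInt_pos A hκc hR₂0 (hR₂0.trans hb))
  have hz : (∫ u in R₂..b, mker κ A u) = 0 := by
    rw [intervalIntegral.integral_congr (g := fun _ => (0:ℝ)) (fun u hu => ?_)]
    · simp
    · rw [uIcc_of_le hb] at hu
      unfold mker
      rw [max_eq_right (hR₁' u (le_trans hR₁₂ hu.1))]
      ring
  unfold Jm
  rw [← hadd, hz, add_zero]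

lemma phi_const {κ : ℝ → ℝ} {A R₁ R₂ : ℝ} (hA : 0 ≤ A) (D : ℝ)
    (hκc : ContinuousOn κ (Set.Ici 0))
    (hR₁' : ∀ r, R₁ ≤ r → r * κ r ≤ -A) (hR₁₂ : R₁ ≤ R₂) (hR₂0 : 0 ≤ R₂)
    {b : ℝ} (hb : R₂ ≤ b) : phi κ A D b = phi κ A D R₂ := by
  rw [phi_eq hA D]
  simp only [Jm_const hκc hR₁' hR₁₂ hR₂0 hb]

end Aux

/-- Properties of `c`, `g` and `f`: `c > 0`, `1/2 ≤ g ≤ 1` on `[0,R₂]`,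
`f(0) = 0`, `f > 0` on `(0,∞)`, `f` is `C¹` with `f′(r) = φ(r)g(r ∧ R₂) ∈ (0,1]`,
`f` is strictly increasing and concave on `[0,∞)`, and `f` is affine on `[R₂,∞)`. -/
theorem c_g_f_properties
    (κ : ℝ → ℝ) (A D R₁ R₂ : ℝ)
    (hA : 0 ≤ A) (hD : 0 < D)
    (hκc : ContinuousOn κ (Set.Ici 0))
    (hκb : ∃ C, ∀ r, 0 ≤ r → |κ r| ≤ C)
    (hR₁ : 1 ≤ R₁) (hR₁' : ∀ r, R₁ ≤ r → r * κ r ≤ -A)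
    (hR₂ : R₁ < R₂)
    (hR₂' : ∀ r, R₂ ≤ r → κ r ≤ -(D ^ 2 / (R₂ * (R₂ - R₁)) + A / R₂)) :
    0 < cconst κ A D R₂ ∧
    (∀ r, 0 ≤ r → r ≤ R₂ → 1 / 2 ≤ gfun κ A D R₂ r ∧ gfun κ A D R₂ r ≤ 1) ∧
    ffun κ A D R₂ 0 = 0 ∧
    (∀ r, 0 < r → 0 < ffun κ A D R₂ r) ∧
    (∀ r, 0 ≤ r →
      HasDerivAt (ffun κ A D R₂) (phi κ A D r * gfun κ A D R₂ (min r R₂)) r) ∧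
    ContinuousOn (fun r => phi κ A D r * gfun κ A D R₂ (min r R₂)) (Set.Ici 0) ∧
    (∀ r, 0 ≤ r → 0 < phi κ A D r * gfun κ A D R₂ (min r R₂) ∧
      phi κ A D r * gfun κ A D R₂ (min r R₂) ≤ 1) ∧
    StrictMonoOn (ffun κ A D R₂) (Set.Ici 0) ∧
    ConcaveOn ℝ (Set.Ici 0) (ffun κ A D R₂) ∧
    (∃ a b : ℝ, ∀ r, R₂ ≤ r → ffun κ A D R₂ r = a * r + b) := by
  obtain ⟨s₀, hs₀neg, hphic⟩ := exists_phi_cont hA D hκc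
  have hR₂0 : (0:ℝ) < R₂ := lt_of_lt_of_le (lt_of_lt_of_le one_pos hR₁) hR₂.le
  have hD2 : (0:ℝ) < D ^ 2 := by positivity
  set U : Set ℝ := Ioi s₀ with hU
  have hUopen : IsOpen U := isOpen_Ioi
  have hmem : ∀ r : ℝ, 0 ≤ r → r ∈ U := fun r hr => lt_of_lt_of_le hs₀neg hr
  have hphiU : ContinuousOn (phi κ A D) U := hphic.mono Ioi_subset_Ici_self
  have hsubint : ∀ a b : ℝ, a ∈ U → b ∈ U → uIcc a b ⊆ U := by
    intro a b ha hb x hx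
    exact lt_of_lt_of_le (lt_min ha hb) hx.1
  -- generic FTC helper
  have ftc : ∀ G : ℝ → ℝ, ContinuousOn G U → ∀ r ∈ U,
      HasDerivAt (fun x => ∫ t in (0:ℝ)..x, G t) (G r) r := by
    intro G hG r hr
    refine intervalIntegral.integral_hasDerivAt_right
      ((hG.mono (hsubint 0 r (hmem 0 le_rfl) hr)).intervalIntegrable) ?_ ?_
    · exact ContinuousOn.stronglyMeasurableAtFilter hUopen hG r hr
    · exact hG.continuousAt (hUopen.mem_nhds hr)
  have hintU : ∀ G : ℝ → ℝ, ContinuousOn G U → ∀ a b : ℝ, a ∈ U → b ∈ U →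
      IntervalIntegrable G volume a b := fun G hG a b ha hb =>
    (hG.mono (hsubint a b ha hb)).intervalIntegrable
  -- PhiF
  have hPhidrv : ∀ r ∈ U, HasDerivAt (PhiF κ A D) (phi κ A D r) r :=
    ftc _ hphiU
  have hPhiC : ContinuousOn (PhiF κ A D) U :=
    fun r hr => ((hPhidrv r hr).continuousAt).continuousWithinAt
  have hPhinn : ∀ r : ℝ, 0 ≤ r → 0 ≤ PhiF κ A D r := fun r hr =>
    intervalIntegral.integral_nonneg hr (fun u _ => (phi_pos κ A D u).le)
  -- the integrand of I
  set Q : ℝ → ℝ := fun s => PhiF κ A D s * (phi κ A D s)⁻¹ with hQdef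
  have hQC : ContinuousOn Q U :=
    hPhiC.mul (hphiU.inv₀ (fun s _ => (phi_pos κ A D s).ne'))
  have hQnn : ∀ s : ℝ, 0 ≤ s → 0 ≤ Q s := fun s hs =>
    mul_nonneg (hPhinn s hs) (inv_nonneg.mpr (phi_pos κ A D s).le)
  set Ifn : ℝ → ℝ := fun r => ∫ s in (0:ℝ)..r, Q s with hIdef
  have hIdrv : ∀ r ∈ U, HasDerivAt Ifn (Q r) r := ftc _ hQC
  have hIC : ContinuousOn Ifn U :=
    fun r hr => ((hIdrv r hr).continuousAt).continuousWithinAt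
  have hInn : ∀ r : ℝ, 0 ≤ r → 0 ≤ Ifn r := fun r hr =>
    intervalIntegral.integral_nonneg hr (fun u hu => hQnn u hu.1)
  have hImono : ∀ a b : ℝ, 0 ≤ a → a ≤ b → Ifn a ≤ Ifn b := by
    intro a b ha hab
    have hadd := integral_add_adjacent_intervals
      (hintU Q hQC 0 a (hmem 0 le_rfl) (hmem a ha))
      (hintU Q hQC a b (hmem a ha) (hmem b (ha.trans hab)))
    have hnn : 0 ≤ ∫ s in a..b, Q s :=
      intervalIntegral.integral_nonneg hab (fun u hu => hQnn u (ha.trans hu.1))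
    simp only [hIdef]
    rw [← hadd]
    linarith
  have hIR₂pos : 0 < Ifn R₂ := by
    refine intervalIntegral_pos_of_pos_on
      (hintU Q hQC 0 R₂ (hmem 0 le_rfl) (hmem R₂ hR₂0.le)) (fun x hx => ?_) hR₂0
    have hPx : 0 < PhiF κ A D x :=
      intervalIntegral_pos_of_pos_on
        (hintU _ hphiU 0 x (hmem 0 le_rfl) (hmem x hx.1.le))
        (fun y _ => phi_pos κ A D y) hx.1
    exact mul_pos hPx (inv_pos.mpr (phi_pos κ A D x))
  have hceq : cconst κ A D R₂ = D ^ 2 / (4 * Ifn R₂) := rfl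
  have hcpos : 0 < cconst κ A D R₂ := by
    rw [hceq]; positivity
  have hgeq : ∀ r, gfun κ A D R₂ r = 1 - 2 * cconst κ A D R₂ / D ^ 2 * Ifn r :=
    fun r => rfl
  have hcoefnn : 0 ≤ 2 * cconst κ A D R₂ / D ^ 2 := by positivity
  have hghalf : 2 * cconst κ A D R₂ / D ^ 2 * Ifn R₂ = 1 / 2 := by
    rw [hceq]
    field_simp
    ring
  -- bounds for g on [0, R₂]
  have hgbound : ∀ r, 0 ≤ r → r ≤ R₂ →
      1 / 2 ≤ gfun κ A D R₂ r ∧ gfun κ A D R₂ r ≤ 1 := by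
    intro r hr hrR
    constructor
    · rw [hgeq r]
      have h1 : 2 * cconst κ A D R₂ / D ^ 2 * Ifn r ≤
          2 * cconst κ A D R₂ / D ^ 2 * Ifn R₂ :=
        mul_le_mul_of_nonneg_left (hImono r R₂ hr hrR) hcoefnn
      rw [hghalf] at h1
      linarith
    · rw [hgeq r]
      have h1 : 0 ≤ 2 * cconst κ A D R₂ / D ^ 2 * Ifn r :=
        mul_nonneg hcoefnn (hInn r hr)
      linarith
  have hgC : ContinuousOn (gfun κ A D R₂) U :=
    continuousOn_const.sub (continuousOn_const.mul hIC)
  -- the derivative F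
  set F : ℝ → ℝ := fun s => phi κ A D s * gfun κ A D R₂ (min s R₂) with hFdef
  have hminmap : MapsTo (fun s : ℝ => min s R₂) U U := by
    intro s hs
    exact lt_min hs (lt_trans hs₀neg hR₂0)
  have hFC : ContinuousOn F U :=
    hphiU.mul (hgC.comp ((continuous_id.min continuous_const).continuousOn) hminmap)
  have hFpos : ∀ r : ℝ, 0 ≤ r → 0 < F r := by
    intro r hr
    have hming : 1 / 2 ≤ gfun κ A D R₂ (min r R₂) :=
      (hgbound _ (le_min hr hR₂0.le) (min_le_right _ _)).1
    exact mul_pos (phi_pos κ A D r) (lt_of_lt_of_le one_half_pos hming)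
  have hFle1 : ∀ r : ℝ, 0 ≤ r → F r ≤ 1 := by
    intro r hr
    have hming := hgbound _ (le_min hr hR₂0.le) (min_le_right r R₂)
    exact mul_le_one₀ (phi_le_one hA D hr) (by linarith [hming.1]) hming.2
  have hfdrv : ∀ r ∈ U, HasDerivAt (ffun κ A D R₂) (F r) r := ftc _ hFC
  have hf0 : ffun κ A D R₂ 0 = 0 := intervalIntegral.integral_same
  have hfcont : ContinuousOn (ffun κ A D R₂) (Ici 0) := fun r hr =>
    ((hfdrv r (hmem r hr)).continuousAt).continuousWithinAt
  have hmonof : StrictMonoOn (ffun κ A D R₂) (Ici 0) := by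
    refine strictMonoOn_of_deriv_pos (convex_Ici 0) hfcont (fun x hx => ?_)
    rw [interior_Ici] at hx
    rw [(hfdrv x (hmem x hx.le)).deriv]
    exact hFpos x hx.le
  have hfpos : ∀ r, 0 < r → 0 < ffun κ A D R₂ r := by
    intro r hr
    have := hmonof (self_mem_Ici) (mem_Ici.mpr hr.le) hr
    rwa [hf0] at this
  -- antitonicity of F on [0, ∞)
  have hFanti : ∀ a b : ℝ, 0 ≤ a → a ≤ b → F b ≤ F a := by
    intro a b ha hab
    have hphiab : phi κ A D b ≤ phi κ A D a := phi_anti hA D hκc ha hab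
    have hminab : min a R₂ ≤ min b R₂ := min_le_min hab le_rfl
    have hgab : gfun κ A D R₂ (min b R₂) ≤ gfun κ A D R₂ (min a R₂) := by
      rw [hgeq, hgeq]
      have := mul_le_mul_of_nonneg_left
        (hImono (min a R₂) (min b R₂) (le_min ha hR₂0.le) hminab) hcoefnn
      linarith
    have hgbnn : 0 ≤ gfun κ A D R₂ (min b R₂) := by
      have := (hgbound _ (le_min (ha.trans hab) hR₂0.le) (min_le_right b R₂)).1
      linarith
    exact mul_le_mul hphiab hgab hgbnn (phi_pos κ A D a).le
  have hconc : ConcaveOn ℝ (Ici 0) (ffun κ A D R₂) := by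
    refine AntitoneOn.concaveOn_of_deriv (convex_Ici 0) hfcont ?_ ?_
    · intro x hx
      rw [interior_Ici] at hx
      exact ((hfdrv x (hmem x hx.le)).differentiableAt).differentiableWithinAt
    · intro a ha b hb hab
      rw [interior_Ici] at ha hb
      rw [(hfdrv a (hmem a ha.le)).deriv, (hfdrv b (hmem b hb.le)).deriv]
      exact hFanti a b ha.le hab
  -- affine on [R₂, ∞)
  have haffine : ∃ a b : ℝ, ∀ r, R₂ ≤ r → ffun κ A D R₂ r = a * r + b := by
    refine ⟨F R₂, ffun κ A D R₂ R₂ - F R₂ * R₂, fun r hr => ?_⟩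
    have hrU : r ∈ U := hmem r (hR₂0.le.trans hr)
    have hadd := integral_add_adjacent_intervals
      (hintU F hFC 0 R₂ (hmem 0 le_rfl) (hmem R₂ hR₂0.le))
      (hintU F hFC R₂ r (hmem R₂ hR₂0.le) hrU)
    have hFconst : ∀ s ∈ uIcc R₂ r, F s = F R₂ := by
      intro s hs
      rw [uIcc_of_le hr] at hs
      simp only [hFdef]
      rw [phi_const hA D hκc hR₁' hR₂.le hR₂0.le hs.1,
        min_eq_right hs.1, min_self]
    have hconstint : (∫ s in R₂..r, F s) = (r - R₂) * F R₂ := by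
      rw [intervalIntegral.integral_congr hFconst,
        intervalIntegral.integral_const, smul_eq_mul]
    have : ffun κ A D R₂ r = ffun κ A D R₂ R₂ + ∫ s in R₂..r, F s := by
      unfold ffun
      rw [← hadd]
    rw [this, hconstint]
    ring
  exact ⟨hcpos, hgbound, hf0, hfpos,
    fun r hr => hfdrv r (hmem r hr),
    hFC.mono (fun x hx => hmem x hx),
    fun r hr => ⟨hFpos r hr, hFle1 r hr⟩,
    hmonof, hconc, haffine⟩
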